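/- Fix a, b ∈ ℝ and β ∈ (0,1). Then for every r ∈ (0,1), the function r ↦ (1/β)·Φ₂(a, b; √r) has derivative (1/(2β√r))·φ₂(a, b; √r) at r. -/

import Mathlib

open Real MeasureTheory Filter Topology

/-- The standard normal density φ(x) = (2π)^{-1/2} exp(-x²/2). -/
noncomputable def stdNormalPDF (x : ℝ) : ℝ :=
  (Real.sqrt (2 * Real.pi))⁻¹ * Real.exp (-x ^ 2 / 2)

/-- The standard normal CDF Φ(x) = ∫_{-∞}^x φ(u) du. -/
noncomputable def stdNormalCDF (x : ℝ) : ℝ :=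
  ∫ u in Set.Iic x, stdNormalPDF u

/-- The standard bivariate normal density with correlation ρ. -/
noncomputable def biNormalPDF (x y ρ : ℝ) : ℝ :=
  (2 * Real.pi * Real.sqrt (1 - ρ ^ 2))⁻¹ *
    Real.exp (-(x ^ 2 - 2 * ρ * x * y + y ^ 2) / (2 * (1 - ρ ^ 2)))

/-- The standard bivariate normal CDF Φ₂(a, b; ρ). -/
noncomputable def biNormalCDF (a b ρ : ℝ) : ℝ :=
  ∫ x in Set.Iic a, ∫ y in Set.Iic b, biNormalPDF x y ρ

/-- The inverse Φ⁻¹ of the standard normal CDF on (0,1). -/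
noncomputable def stdNormalCDFInv (p : ℝ) : ℝ :=
  Function.invFun stdNormalCDF p

open Set


lemma stdNormalPDF_nonneg (x : ℝ) : 0 ≤ stdNormalPDF x := by
  unfold stdNormalPDF
  positivity

lemma stdNormalPDF_le (x : ℝ) : stdNormalPDF x ≤ (Real.sqrt (2 * Real.pi))⁻¹ := by
  unfold stdNormalPDF
  have h1 : Real.exp (-x ^ 2 / 2) ≤ 1 := by
    rw [Real.exp_le_one_iff]; nlinarith [sq_nonneg x]
  have h2 : (0:ℝ) < (Real.sqrt (2 * Real.pi))⁻¹ := by positivity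
  nlinarith

lemma continuous_stdNormalPDF : Continuous stdNormalPDF := by
  unfold stdNormalPDF; fun_prop

lemma integrable_stdNormalPDF : Integrable stdNormalPDF := by
  have : Integrable (fun x : ℝ => Real.exp (-(1/2 : ℝ) * x ^ 2)) := integrable_exp_neg_mul_sq (by norm_num)
  have h := this.const_mul (Real.sqrt (2 * Real.pi))⁻¹
  refine h.congr ?_
  filter_upwards with x
  unfold stdNormalPDF
  ring_nf

lemma hasDerivAt_stdNormalCDF (z : ℝ) : HasDerivAt stdNormalCDF (stdNormalPDF z) z := by
  have key : ∀ x : ℝ, stdNormalCDF x = stdNormalCDF 0 + ∫ u in (0:ℝ)..x, stdNormalPDF u := by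
    intro x
    rw [← intervalIntegral.integral_Iic_sub_Iic integrable_stdNormalPDF.integrableOn
      integrable_stdNormalPDF.integrableOn]
    unfold stdNormalCDF; ring
  have h : HasDerivAt (fun x => stdNormalCDF 0 + ∫ u in (0:ℝ)..x, stdNormalPDF u)
      (stdNormalPDF z) z := by
    have := (intervalIntegral.integral_hasDerivAt_right
      (continuous_stdNormalPDF.intervalIntegrable 0 z)
      (continuous_stdNormalPDF.stronglyMeasurableAtFilter _ _)
      continuous_stdNormalPDF.continuousAt)
    exact this.const_add _
  exact h.congr_of_eventuallyEq (by filter_upwards with x; rw [key x])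

lemma continuous_stdNormalCDF : Continuous stdNormalCDF := by
  have : Differentiable ℝ stdNormalCDF := fun z => (hasDerivAt_stdNormalCDF z).differentiableAt
  exact this.continuous

lemma stdNormalCDF_nonneg (x : ℝ) : 0 ≤ stdNormalCDF x :=
  MeasureTheory.integral_nonneg fun u => stdNormalPDF_nonneg u

lemma stdNormalCDF_le_one (x : ℝ) : stdNormalCDF x ≤ 1 := by
  have h1 : stdNormalCDF x ≤ ∫ u, stdNormalPDF u := by
    apply MeasureTheory.setIntegral_le_integral integrable_stdNormalPDF
    filter_upwards with u using stdNormalPDF_nonneg u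
  have h2 : ∫ u, stdNormalPDF u = 1 := by
    unfold stdNormalPDF
    rw [MeasureTheory.integral_const_mul]
    have : ∀ u : ℝ, Real.exp (-u ^ 2 / 2) = Real.exp (-(1/2:ℝ) * u ^ 2) := by
      intro u; ring_nf
    rw [show (fun u : ℝ => Real.exp (-u^2/2)) = fun u : ℝ => Real.exp (-(1/2:ℝ) * u ^ 2) from funext this]
    rw [integral_gaussian]
    rw [show Real.pi / (1/2:ℝ) = 2 * Real.pi by ring]
    rw [inv_mul_cancel₀]
    positivity
  linarith [h2 ▸ h1]


lemma biNormal_decomp (x y ρ : ℝ) (hρ : ρ ^ 2 < 1) :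
    biNormalPDF x y ρ = stdNormalPDF x *
      ((Real.sqrt (1 - ρ ^ 2))⁻¹ * stdNormalPDF ((y - ρ * x) / Real.sqrt (1 - ρ ^ 2))) := by
  have h2π : (0:ℝ) < 2 * Real.pi := by positivity
  set σ := Real.sqrt (1 - ρ ^ 2) with hσdef
  have hσpos : 0 < σ := Real.sqrt_pos.2 (by nlinarith)
  have hσ2 : σ ^ 2 = 1 - ρ ^ 2 := Real.sq_sqrt (by nlinarith)
  have key : (-x ^ 2 / 2) + (-(((y - ρ * x) / σ) ^ 2) / 2)
      = -(x ^ 2 - 2 * ρ * x * y + y ^ 2) / (2 * (1 - ρ ^ 2)) := by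
    have h1 : ((y - ρ * x) / σ) ^ 2 = (y - ρ * x) ^ 2 / (1 - ρ ^ 2) := by
      rw [div_pow, hσ2]
    rw [h1]
    have h0 : (1:ℝ) - ρ ^ 2 ≠ 0 := by nlinarith
    field_simp
    ring
  have keyc : (2 * Real.pi * σ)⁻¹ = (Real.sqrt (2 * Real.pi))⁻¹ * (σ⁻¹ * (Real.sqrt (2 * Real.pi))⁻¹) := by
    have h : (Real.sqrt (2 * Real.pi))⁻¹ * (σ⁻¹ * (Real.sqrt (2 * Real.pi))⁻¹)
        = (Real.sqrt (2 * Real.pi) * Real.sqrt (2 * Real.pi) * σ)⁻¹ := by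
      rw [mul_inv, mul_inv]; ring
    rw [h, Real.mul_self_sqrt h2π.le]
  unfold biNormalPDF stdNormalPDF
  rw [show (Real.sqrt (2 * Real.pi))⁻¹ * Real.exp (-x ^ 2 / 2) *
      (σ⁻¹ * ((Real.sqrt (2 * Real.pi))⁻¹ * Real.exp (-((y - ρ * x) / σ) ^ 2 / 2)))
      = ((Real.sqrt (2 * Real.pi))⁻¹ * (σ⁻¹ * (Real.sqrt (2 * Real.pi))⁻¹)) *
        (Real.exp (-x ^ 2 / 2) * Real.exp (-((y - ρ * x) / σ) ^ 2 / 2)) by ring]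
  rw [← Real.exp_add, ← keyc]
  congr 1
  rw [← key]

lemma inner_int (b x ρ : ℝ) (hρ : ρ ^ 2 < 1) :
    ∫ y in Set.Iic b, biNormalPDF x y ρ
      = stdNormalPDF x * stdNormalCDF ((b - ρ * x) / Real.sqrt (1 - ρ ^ 2)) := by
  set σ := Real.sqrt (1 - ρ ^ 2) with hσdef
  have hσpos : 0 < σ := Real.sqrt_pos.2 (by nlinarith)
  set b' := (b - ρ * x) / σ with hb'
  have himg : (fun u => σ * u + ρ * x) '' Set.Iic b' = Set.Iic b := by
    ext y
    simp only [Set.mem_image, Set.mem_Iic]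
    constructor
    · rintro ⟨u, hu, rfl⟩
      rw [hb', le_div_iff₀ hσpos] at hu
      nlinarith
    · intro hy
      refine ⟨(y - ρ * x) / σ, ?_, by field_simp; ring⟩
      rw [hb', div_le_div_iff_of_pos_right hσpos]
      linarith
  have hchg : ∫ y in Set.Iic b, stdNormalPDF ((y - ρ * x) / σ)
      = ∫ u in Set.Iic b', |σ| • stdNormalPDF ((σ * u + ρ * x - ρ * x) / σ) := by
    rw [← himg]
    exact integral_image_eq_integral_abs_deriv_smul measurableSet_Iic
      (fun u _ => (by simpa using ((hasDerivAt_id u).const_mul σ).add_const (ρ * x) :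
          HasDerivAt (fun u => σ * u + ρ * x) σ u).hasDerivWithinAt)
      (fun u _ v _ h => by
        have h2 := add_right_cancel h
        exact mul_left_cancel₀ hσpos.ne' h2) _
  have hsimp : ∀ u : ℝ, |σ| • stdNormalPDF ((σ * u + ρ * x - ρ * x) / σ) = σ * stdNormalPDF u := by
    intro u
    rw [abs_of_pos hσpos, smul_eq_mul]
    congr 2
    field_simp
    ring
  calc ∫ y in Set.Iic b, biNormalPDF x y ρ
      = ∫ y in Set.Iic b, (stdNormalPDF x * σ⁻¹) * stdNormalPDF ((y - ρ * x) / σ) := by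
        refine setIntegral_congr_fun measurableSet_Iic fun y _ => ?_
        rw [biNormal_decomp x y ρ hρ]; ring
    _ = (stdNormalPDF x * σ⁻¹) * ∫ y in Set.Iic b, stdNormalPDF ((y - ρ * x) / σ) := by
        rw [MeasureTheory.integral_const_mul]
    _ = (stdNormalPDF x * σ⁻¹) * (σ * ∫ u in Set.Iic b', stdNormalPDF u) := by
        rw [hchg]
        congr 1
        rw [show (fun u => |σ| • stdNormalPDF ((σ * u + ρ * x - ρ * x) / σ))
            = fun u => σ * stdNormalPDF u from funext hsimp]
        exact MeasureTheory.integral_const_mul σ _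
    _ = stdNormalPDF x * stdNormalCDF b' := by
        unfold stdNormalCDF
        field_simp


-- Helper A : derivative of ρ ↦ (b - ρ x)/√(1-ρ²)
lemma hasDerivAt_u (b x ρ : ℝ) (hρ : ρ ^ 2 < 1) :
    HasDerivAt (fun ρ' : ℝ => (b - ρ' * x) / Real.sqrt (1 - ρ' ^ 2))
      ((ρ * b - x) / (Real.sqrt (1 - ρ ^ 2)) ^ 3) ρ := by
  have h0 : (0:ℝ) < 1 - ρ ^ 2 := by nlinarith
  set σ := Real.sqrt (1 - ρ ^ 2) with hσdef
  have hσpos : 0 < σ := Real.sqrt_pos.2 h0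
  have hσ2 : σ ^ 2 = 1 - ρ ^ 2 := Real.sq_sqrt h0.le
  have h1 : HasDerivAt (fun ρ' : ℝ => 1 - ρ' ^ 2) (-(2 * ρ)) ρ := by
    simpa using (hasDerivAt_pow 2 ρ).const_sub 1
  have h2 : HasDerivAt (fun ρ' : ℝ => Real.sqrt (1 - ρ' ^ 2))
      (1 / (2 * σ) * -(2 * ρ)) ρ :=
    (Real.hasDerivAt_sqrt h0.ne').comp ρ h1
  have h3 : HasDerivAt (fun ρ' : ℝ => b - ρ' * x) (-x) ρ := by
    simpa using ((hasDerivAt_id ρ).mul_const x).const_sub b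
  have h4 := h3.div h2 hσpos.ne'
  convert h4 using 1
  · rfl
  · rfl
  · rfl
  rw [← hσdef]
  field_simp
  linear_combination x * hσ2

-- Helper C : derivative in first argument
lemma hasDerivAt_biNormalPDF_fst (b ρ x : ℝ) (hρ : ρ ^ 2 < 1) :
    HasDerivAt (fun t : ℝ => biNormalPDF t b ρ)
      (stdNormalPDF x * stdNormalPDF ((b - ρ * x) / Real.sqrt (1 - ρ ^ 2)) *
        ((ρ * b - x) / (Real.sqrt (1 - ρ ^ 2)) ^ 3)) x := by
  have h0 : (0:ℝ) < 1 - ρ ^ 2 := by nlinarith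
  set σ := Real.sqrt (1 - ρ ^ 2) with hσdef
  have hσpos : 0 < σ := Real.sqrt_pos.2 h0
  have hσ2 : σ ^ 2 = 1 - ρ ^ 2 := Real.sq_sqrt h0.le
  have h1 : HasDerivAt (fun t : ℝ => t ^ 2 - 2 * ρ * t * b + b ^ 2) (2 * x - 2 * ρ * b) x := by
    have hf : (fun t : ℝ => t ^ 2 - 2 * ρ * t * b + b ^ 2)
        = fun t : ℝ => t ^ 2 - (2 * ρ * b) * t + b ^ 2 := by funext t; ring
    rw [hf]
    simpa using ((hasDerivAt_pow 2 x).sub ((hasDerivAt_id x).const_mul (2 * ρ * b))).add_const (b ^ 2)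
  have h2 : HasDerivAt (fun t : ℝ => -(t ^ 2 - 2 * ρ * t * b + b ^ 2) / (2 * (1 - ρ ^ 2)))
      (-(2 * x - 2 * ρ * b) / (2 * (1 - ρ ^ 2))) x := h1.neg.div_const _
  have h3 := (h2.exp.const_mul ((2 * Real.pi * σ)⁻¹))
  have hfun : (fun t : ℝ => biNormalPDF t b ρ)
      = fun t : ℝ => (2 * Real.pi * σ)⁻¹ *
          Real.exp (-(t ^ 2 - 2 * ρ * t * b + b ^ 2) / (2 * (1 - ρ ^ 2))) := by
    funext t; rfl
  rw [hfun]
  convert h3 using 1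
  · rfl
  · rfl
  have hd : (2 * Real.pi * σ)⁻¹ *
      Real.exp (-(x ^ 2 - 2 * ρ * x * b + b ^ 2) / (2 * (1 - ρ ^ 2)))
      = stdNormalPDF x * (σ⁻¹ * stdNormalPDF ((b - ρ * x) / σ)) := by
    rw [show (2 * Real.pi * σ)⁻¹ *
      Real.exp (-(x ^ 2 - 2 * ρ * x * b + b ^ 2) / (2 * (1 - ρ ^ 2))) = biNormalPDF x b ρ from rfl,
      biNormal_decomp x b ρ hρ, ← hσdef]
  rw [show (2 * Real.pi * σ)⁻¹ *
      (Real.exp (-(x ^ 2 - 2 * ρ * x * b + b ^ 2) / (2 * (1 - ρ ^ 2))) *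
        (-(2 * x - 2 * ρ * b) / (2 * (1 - ρ ^ 2))))
      = ((2 * Real.pi * σ)⁻¹ *
        Real.exp (-(x ^ 2 - 2 * ρ * x * b + b ^ 2) / (2 * (1 - ρ ^ 2)))) *
        (-(2 * x - 2 * ρ * b) / (2 * (1 - ρ ^ 2))) from by ring, hd, ← hσ2]
  field_simp
  ring

-- Helper D : tendsto 0 at -∞
lemma tendsto_biNormalPDF_atBot (b ρ : ℝ) (hρ : ρ ^ 2 < 1) :
    Tendsto (fun x : ℝ => biNormalPDF x b ρ) atBot (𝓝 0) := by
  have h0 : (0:ℝ) < 1 - ρ ^ 2 := by nlinarith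
  have hQ : Tendsto (fun x : ℝ => (x - ρ * b) ^ 2 + (1 - ρ ^ 2) * b ^ 2) atBot atTop := by
    apply tendsto_atTop_add_const_right
    have h1 : Tendsto (fun x : ℝ => x - ρ * b) atBot atBot :=
      tendsto_atBot_add_const_right _ (-(ρ * b)) tendsto_id |>.congr
        (fun x => by simp [sub_eq_add_neg, add_comm])
    have h2 : Tendsto (fun y : ℝ => y ^ 2) atBot atTop := by
      have h := (tendsto_pow_atTop (α := ℝ) (n := 2) (by norm_num)).comp tendsto_abs_atBot_atTop
      refine h.congr fun y => ?_
      simp [sq_abs]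
    exact h2.comp h1
  have harg : Tendsto (fun x : ℝ => -(x ^ 2 - 2 * ρ * x * b + b ^ 2) / (2 * (1 - ρ ^ 2)))
      atBot atBot := by
    have hc : -(2 * (1 - ρ ^ 2))⁻¹ < 0 := by
      have : (0:ℝ) < (2 * (1 - ρ ^ 2))⁻¹ := by positivity
      linarith
    have := hQ.atTop_mul_const_of_neg hc
    refine this.congr fun x => ?_
    field_simp
    ring
  have hexp : Tendsto (fun x : ℝ =>
      Real.exp (-(x ^ 2 - 2 * ρ * x * b + b ^ 2) / (2 * (1 - ρ ^ 2)))) atBot (𝓝 0) :=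
    Real.tendsto_exp_atBot.comp harg
  have := hexp.const_mul ((2 * Real.pi * Real.sqrt (1 - ρ ^ 2))⁻¹)
  simpa [biNormalPDF] using this

lemma exp_linear_bound (c x : ℝ) :
    Real.exp (-x ^ 2 / 2) * (|c| + |x|) ≤ (|c| + 1) * Real.exp (-(4:ℝ)⁻¹ * x ^ 2) := by
  have hx : |x| ≤ Real.exp ((4:ℝ)⁻¹ * x ^ 2) := by
    have h1 : |x| ≤ 1 + (4:ℝ)⁻¹ * x ^ 2 := by nlinarith [sq_nonneg (|x| - 2), sq_abs x]
    have h2 := Real.add_one_le_exp ((4:ℝ)⁻¹ * x ^ 2)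
    linarith
  have h3 : Real.exp (-x ^ 2 / 2) * |x| ≤ Real.exp (-(4:ℝ)⁻¹ * x ^ 2) := by
    calc Real.exp (-x ^ 2 / 2) * |x| ≤ Real.exp (-x ^ 2 / 2) * Real.exp ((4:ℝ)⁻¹ * x ^ 2) :=
          mul_le_mul_of_nonneg_left hx (Real.exp_pos _).le
      _ = Real.exp (-x ^ 2 / 2 + (4:ℝ)⁻¹ * x ^ 2) := (Real.exp_add _ _).symm
      _ ≤ Real.exp (-(4:ℝ)⁻¹ * x ^ 2) := Real.exp_le_exp.2 (le_of_eq (by ring))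
  have h4 : Real.exp (-x ^ 2 / 2) ≤ Real.exp (-(4:ℝ)⁻¹ * x ^ 2) :=
    Real.exp_le_exp.2 (by nlinarith [sq_nonneg x])
  have h5 := mul_le_mul_of_nonneg_left h4 (abs_nonneg c)
  nlinarith [h3, h5]

lemma biNormalCDF_rep (a b ρ : ℝ) (hρ : ρ ^ 2 < 1) :
    biNormalCDF a b ρ
      = ∫ x in Set.Iic a, stdNormalPDF x * stdNormalCDF ((b - ρ * x) / Real.sqrt (1 - ρ ^ 2)) := by
  unfold biNormalCDF
  exact setIntegral_congr_fun measurableSet_Iic fun x _ => inner_int b x ρ hρ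

lemma hasDerivAt_biNormalCDF (a b ρ₀ : ℝ) (hρ : ρ₀ ∈ Set.Ioo (-1:ℝ) 1) :
    HasDerivAt (fun ρ => biNormalCDF a b ρ) (biNormalPDF a b ρ₀) ρ₀ := by
  obtain ⟨hρ1, hρ2⟩ := hρ
  have hρ₀abs : |ρ₀| < 1 := abs_lt.2 ⟨hρ1, hρ2⟩
  set μ := volume.restrict (Set.Iic a) with hμ
  set κ := (1 + |ρ₀|) / 2 with hκ
  have hκ0 : 0 ≤ κ := by rw [hκ]; positivity
  have hκ1 : κ < 1 := by rw [hκ]; linarith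
  set ε := (1 - |ρ₀|) / 2 with hε
  have hεpos : 0 < ε := by rw [hε]; linarith
  have hball : ∀ ρ ∈ Metric.ball ρ₀ ε, |ρ| ≤ κ := by
    intro ρ hρb
    rw [Metric.mem_ball, Real.dist_eq] at hρb
    have h1 := abs_sub_abs_le_abs_sub ρ ρ₀
    rw [hκ]; rw [hε] at hρb; linarith
  have hρsq : ∀ ρ ∈ Metric.ball ρ₀ ε, ρ ^ 2 < 1 := by
    intro ρ h
    have h1 := hball ρ h
    nlinarith [abs_nonneg ρ, sq_abs ρ]
  have hκsq : κ ^ 2 < 1 := by nlinarith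
  set m := Real.sqrt (1 - κ ^ 2) with hm
  have hmpos : 0 < m := Real.sqrt_pos.2 (by nlinarith)
  have hσ_ge : ∀ ρ ∈ Metric.ball ρ₀ ε, m ≤ Real.sqrt (1 - ρ ^ 2) := by
    intro ρ h
    apply Real.sqrt_le_sqrt
    nlinarith [hball ρ h, sq_abs ρ, abs_nonneg ρ]
  set c0 := (Real.sqrt (2 * Real.pi))⁻¹ with hc0
  have hc0pos : 0 < c0 := by rw [hc0]; positivity
  set F : ℝ → ℝ → ℝ := fun ρ x =>
    stdNormalPDF x * stdNormalCDF ((b - ρ * x) / Real.sqrt (1 - ρ ^ 2)) with hF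
  set F' : ℝ → ℝ → ℝ := fun ρ x =>
    stdNormalPDF x * stdNormalPDF ((b - ρ * x) / Real.sqrt (1 - ρ ^ 2)) *
      ((ρ * b - x) / (Real.sqrt (1 - ρ ^ 2)) ^ 3) with hF'
  set bound : ℝ → ℝ := fun x =>
    (c0 * c0 * (m ^ 3)⁻¹ * (|b| + 1)) * Real.exp (-(4:ℝ)⁻¹ * x ^ 2) with hbound
  have hFcont : ∀ ρ : ℝ, Continuous (F ρ) := by
    intro ρ
    exact continuous_stdNormalPDF.mul (continuous_stdNormalCDF.comp
      ((continuous_const.sub (continuous_const.mul continuous_id)).div_const _))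
  have hF'cont : ∀ ρ : ℝ, Continuous (F' ρ) := by
    intro ρ
    exact (continuous_stdNormalPDF.mul (continuous_stdNormalPDF.comp
      ((continuous_const.sub (continuous_const.mul continuous_id)).div_const _))).mul
      ((continuous_const.sub continuous_id).div_const _)
  have bound_int : Integrable bound μ := by
    have h := (integrable_exp_neg_mul_sq (show (0:ℝ) < (4:ℝ)⁻¹ by norm_num)).const_mul
      (c0 * c0 * (m ^ 3)⁻¹ * (|b| + 1))
    exact h.restrict
  have hF_meas : ∀ᶠ ρ in 𝓝 ρ₀, AEStronglyMeasurable (F ρ) μ :=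
    Filter.Eventually.of_forall fun ρ => ((hFcont ρ).aestronglyMeasurable).restrict
  have hF_int : Integrable (F ρ₀) μ := by
    refine (integrable_stdNormalPDF.restrict).mono
      ((hFcont ρ₀).aestronglyMeasurable.restrict) ?_
    filter_upwards with x
    rw [Real.norm_eq_abs, Real.norm_eq_abs, hF]
    simp only
    rw [abs_mul]
    have h1 := stdNormalPDF_nonneg x
    have h2 := stdNormalCDF_nonneg ((b - ρ₀ * x) / Real.sqrt (1 - ρ₀ ^ 2))
    have h3 := stdNormalCDF_le_one ((b - ρ₀ * x) / Real.sqrt (1 - ρ₀ ^ 2))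
    rw [abs_of_nonneg h1, abs_of_nonneg h2]
    nlinarith
  have hF'_meas : AEStronglyMeasurable (F' ρ₀) μ := ((hF'cont ρ₀).aestronglyMeasurable).restrict
  have h_bound : ∀ᵐ x ∂μ, ∀ ρ ∈ Metric.ball ρ₀ ε, ‖F' ρ x‖ ≤ bound x := by
    filter_upwards with x
    intro ρ hρb
    have hρ2 := hρsq ρ hρb
    have hσpos : 0 < Real.sqrt (1 - ρ ^ 2) := Real.sqrt_pos.2 (by nlinarith)
    have hσge := hσ_ge ρ hρb
    have habs : |ρ * b - x| ≤ |b| + |x| := by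
      have h1 : |ρ * b - x| ≤ |ρ * b| + |x| := abs_sub _ _
      rw [abs_mul] at h1
      have h2 := hball ρ hρb
      nlinarith [abs_nonneg b, abs_nonneg x, abs_nonneg ρ]
    rw [Real.norm_eq_abs, hF']
    simp only
    rw [abs_mul, abs_mul, abs_div, abs_of_nonneg (stdNormalPDF_nonneg x),
      abs_of_nonneg (stdNormalPDF_nonneg _), abs_of_pos (pow_pos hσpos 3)]
    have key1 : stdNormalPDF x * stdNormalPDF ((b - ρ * x) / Real.sqrt (1 - ρ ^ 2)) *
        (|ρ * b - x| / Real.sqrt (1 - ρ ^ 2) ^ 3)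
        ≤ (c0 * Real.exp (-x ^ 2 / 2)) * c0 * ((|b| + |x|) / m ^ 3) := by
      have e1 : stdNormalPDF x = c0 * Real.exp (-x ^ 2 / 2) := rfl
      rw [e1]
      gcongr
      exact stdNormalPDF_le _
    refine key1.trans ?_
    have e2 : (c0 * Real.exp (-x ^ 2 / 2)) * c0 * ((|b| + |x|) / m ^ 3)
        = (c0 * c0 * (m ^ 3)⁻¹) * (Real.exp (-x ^ 2 / 2) * (|b| + |x|)) := by ring
    rw [e2]
    have e3 := mul_le_mul_of_nonneg_left (exp_linear_bound b x)
      (show (0:ℝ) ≤ c0 * c0 * (m ^ 3)⁻¹ by positivity)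
    refine e3.trans ?_
    simp only [hbound]
    exact le_of_eq (by ring)
  have h_diff : ∀ᵐ x ∂μ, ∀ ρ ∈ Metric.ball ρ₀ ε, HasDerivAt (fun ρ' => F ρ' x) (F' ρ x) ρ := by
    filter_upwards with x
    intro ρ hρb
    have hA := hasDerivAt_u b x ρ (hρsq ρ hρb)
    have hB := (hasDerivAt_stdNormalCDF ((b - ρ * x) / Real.sqrt (1 - ρ ^ 2))).comp ρ hA
    have hC := hB.const_mul (stdNormalPDF x)
    simp only [hF, hF', Function.comp] at hC ⊢
    convert hC using 1
    · rfl
    · rfl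
    ring
  obtain ⟨hF'int, hderiv⟩ := hasDerivAt_integral_of_dominated_loc_of_deriv_le (Metric.ball_mem_nhds ρ₀ hεpos) hF_meas
    hF_int hF'_meas h_bound bound_int h_diff
  have h0 : ρ₀ ^ 2 < 1 := by nlinarith [sq_abs ρ₀, abs_nonneg ρ₀]
  have heval : (∫ x, F' ρ₀ x ∂μ) = biNormalPDF a b ρ₀ := by
    have hIic := integral_Iic_of_hasDerivAt_of_tendsto' (a := a)
      (f := fun t => biNormalPDF t b ρ₀) (f' := F' ρ₀)
      (fun x _ => by simpa only [hF'] using hasDerivAt_biNormalPDF_fst b ρ₀ x h0)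
      hF'int (tendsto_biNormalPDF_atBot b ρ₀ h0)
    rw [hμ]
    simpa using hIic
  have hrep : (fun ρ => biNormalCDF a b ρ) =ᶠ[𝓝 ρ₀] fun ρ => ∫ x, F ρ x ∂μ := by
    filter_upwards [Metric.ball_mem_nhds ρ₀ hεpos] with ρ hρb
    rw [hμ]
    simpa only [hF] using biNormalCDF_rep a b ρ (hρsq ρ hρb)
  have hderiv' : HasDerivAt (fun ρ => ∫ x, F ρ x ∂μ) (biNormalPDF a b ρ₀) ρ₀ := heval ▸ hderiv
  exact hderiv'.congr_of_eventuallyEq hrep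


/-- Fix a, b ∈ ℝ and β ∈ (0,1). Then for every r ∈ (0,1), the
function r ↦ (1/β)·Φ₂(a, b; √r) has derivative (1/(2β√r))·φ₂(a, b; √r) at r. -/
theorem hasDerivAt_policyValue_rsq (a b β : ℝ) (hβ : β ∈ Set.Ioo (0 : ℝ) 1)
    (r : ℝ) (hr : r ∈ Set.Ioo (0 : ℝ) 1) :
    HasDerivAt (fun r' : ℝ => (1 / β) * biNormalCDF a b (Real.sqrt r'))
      ((1 / (2 * β * Real.sqrt r)) * biNormalPDF a b (Real.sqrt r)) r := by
  obtain ⟨hr1, hr2⟩ := hr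
  have hs_pos : 0 < Real.sqrt r := Real.sqrt_pos.2 hr1
  have hs_lt : Real.sqrt r < 1 := by
    have := Real.sqrt_lt_sqrt hr1.le hr2
    simpa using this
  have h1 : HasDerivAt (fun ρ => biNormalCDF a b ρ) (biNormalPDF a b (Real.sqrt r))
      (Real.sqrt r) := hasDerivAt_biNormalCDF a b _ ⟨by linarith, hs_lt⟩
  have h2 : HasDerivAt Real.sqrt (1 / (2 * Real.sqrt r)) r :=
    Real.hasDerivAt_sqrt (ne_of_gt hr1)
  have h3 := h1.comp r h2
  have h4 := h3.const_mul (1 / β)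
  have hβ0 : β ≠ 0 := ne_of_gt hβ.1
  have heq : (1 / (2 * β * Real.sqrt r)) * biNormalPDF a b (Real.sqrt r)
      = 1 / β * (biNormalPDF a b (Real.sqrt r) * (1 / (2 * Real.sqrt r))) := by
    rw [div_mul_eq_mul_div, one_mul, div_mul_eq_mul_div, mul_one_div, one_mul, div_div]
    ring_nf
  rw [heq]
  exact h4
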